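/- arXiv:2310.11167 — 2 statements merged into one kernel-verified Lean document; each statement's English description precedes it below -/
import Mathlib

section
/- No tall strider is a willow; that is, if G is a 12-vertex graph containing a triangle C = {x1, x2, x3} such that the sets N(x1)\C, N(x2)\C, N(x3)\C are pairwise disjoint cliques of size 3, then G is not an n-willow for any positive integer n. -/
/-- A directed path (walk) of length `ℓ` from `u` to `v` along the relation `r`. -/
def DirPath {T : Type*} (r : T → T → Prop) (u v : T) (ℓ : ℕ) : Prop :=
  ∃ p : ℕ → T, p 0 = u ∧ p ℓ = v ∧ ∀ i < ℓ, r (p i) (p (i + 1))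

/-- `r` is an orientation of a tree: it is asymmetric and its underlying
(symmetrized) simple graph is a tree. -/
structure IsOrientedTree {T : Type*} (r : T → T → Prop) : Prop where
  asymm : ∀ u v, r u v → ¬ r v u
  tree : (SimpleGraph.fromRel r).IsTree

/-- `G` is an `n`-willow defined by the oriented tree `r` on `T`, via the injection
`f` of its vertices into `T`: two distinct vertices are adjacent iff `T` has a
directed path between them (in either direction) of length not a multiple of `n`. -/
def IsNWillowOn {V T : Type*} (n : ℕ) (G : SimpleGraph V) (r : T → T → Prop)
    (f : V → T) : Prop :=
  IsOrientedTree r ∧ Function.Injective f ∧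
    ∀ u v : V, u ≠ v →
      (G.Adj u v ↔ ∃ ℓ, ¬ (n ∣ ℓ) ∧ (DirPath r (f u) (f v) ℓ ∨ DirPath r (f v) (f u) ℓ))

/-- `G` is an `n`-willow. -/
def IsNWillow {V : Type*} (n : ℕ) (G : SimpleGraph V) : Prop :=
  ∃ (T : Type) (r : T → T → Prop) (f : V → T), IsNWillowOn n G r f

/-- `G` is a willow: an `n`-willow for some positive integer `n`. -/
def IsWillow {V : Type*} (G : SimpleGraph V) : Prop :=
  ∃ n : ℕ, 0 < n ∧ IsNWillow n G

section Aux

open SimpleGraph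
open scoped Classical

variable {T : Type*} {r : T → T → Prop}

/-- The signed weight of a walk in the symmetrization of `r`: each step counts `+1`
if traversed along `r` and `-1` against it. -/
noncomputable def walkWt (r : T → T → Prop) {u v : T} (w : (fromRel r).Walk u v) : ℤ :=
  (w.darts.map (fun d => if r d.toProd.1 d.toProd.2 then (1:ℤ) else -1)).sum

lemma walkWt_append {u v w : T} (p : (fromRel r).Walk u v) (q : (fromRel r).Walk v w) :
    walkWt r (p.append q) = walkWt r p + walkWt r q := by
  simp [walkWt, Walk.darts_append]

lemma walkWt_concat {u v w : T} (p : (fromRel r).Walk u v) (h : (fromRel r).Adj v w) :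
    walkWt r (p.concat h) = walkWt r p + (if r v w then (1:ℤ) else -1) := by
  simp [walkWt, Walk.darts_concat]

/-- An oriented tree admits a potential function which increases by exactly `1`
along each oriented edge. -/
lemma exists_potential (hasymm : ∀ u v, r u v → ¬ r v u)
    (hT : (fromRel r).IsTree) :
    ∃ ψ : T → ℤ, ∀ a b, r a b → ψ b = ψ a + 1 := by
  classical
  obtain ⟨t0⟩ := hT.isConnected.nonempty
  have hreach : ∀ t, (fromRel r).Reachable t0 t := fun t => hT.isConnected.preconnected t0 t
  let P : ∀ t, (fromRel r).Path t0 t := fun t => (hreach t).some.toPath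
  set ψ : T → ℤ := fun t => walkWt r (P t).val with hψdef
  have hkey : ∀ t (q : (fromRel r).Walk t0 t), q.IsPath → walkWt r q = ψ t := by
    intro t q hq
    have h := hT.IsAcyclic.path_unique ⟨q, hq⟩ (P t)
    exact congrArg (fun p : (fromRel r).Path t0 t => walkWt r p.val) h
  refine ⟨ψ, ?_⟩
  intro a b hr
  have hne : a ≠ b := by rintro rfl; exact hasymm a a hr hr
  have hadj : (fromRel r).Adj a b := (fromRel_adj r a b).mpr ⟨hne, Or.inl hr⟩
  by_cases hb : b ∈ (P a).val.support
  · have hsp := ((P a).val.take_spec hb)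
    have htp : (((P a).val.takeUntil b hb)).IsPath := (P a).prop.takeUntil hb
    have hdp : (((P a).val.dropUntil b hb)).IsPath := (P a).prop.dropUntil hb
    have hsingle : ((Walk.cons hadj.symm Walk.nil) : (fromRel r).Walk b a).IsPath := by
      simp [Walk.isPath_def, hne.symm]
    have huniq := hT.IsAcyclic.path_unique
      (⟨(P a).val.dropUntil b hb, hdp⟩ : (fromRel r).Path b a)
      ⟨Walk.cons hadj.symm Walk.nil, hsingle⟩
    have hwd : walkWt r ((P a).val.dropUntil b hb) = -1 := by
      have h2 := congrArg (fun p : (fromRel r).Path b a => walkWt r p.val) huniq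
      simp only at h2
      rw [h2]
      simp [walkWt, hasymm a b hr]
    have hψa : ψ a = walkWt r (P a).val := rfl
    have := walkWt_append ((P a).val.takeUntil b hb) ((P a).val.dropUntil b hb)
    rw [hsp] at this
    have hψb : walkWt r ((P a).val.takeUntil b hb) = ψ b := hkey b _ htp
    rw [hψb, hwd] at this
    omega
  · have hcp : (((P a).val.concat hadj)).IsPath := by
      rw [Walk.isPath_def, Walk.support_concat]
      rw [List.nodup_append]
      refine ⟨(P a).prop.support_nodup, List.nodup_singleton b, ?_⟩
      intro x hx y hy hxy
      simp at hy
      exact hb (hy ▸ hxy ▸ hx)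
    have h1 : walkWt r ((P a).val.concat hadj) = ψ b := hkey b _ hcp
    rw [walkWt_concat, if_pos hr] at h1
    have : walkWt r (P a).val = ψ a := rfl
    omega

lemma dirPath_trans {u v w : T} {ℓ ℓ' : ℕ} (h1 : DirPath r u v ℓ)
    (h2 : DirPath r v w ℓ') : DirPath r u w (ℓ + ℓ') := by
  obtain ⟨p, hp0, hpl, hps⟩ := h1
  obtain ⟨q, hq0, hql, hqs⟩ := h2
  refine ⟨fun i => if i < ℓ then p i else q (i - ℓ), ?_, ?_, ?_⟩
  · by_cases h : 0 < ℓ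
    · simp [h, hp0]
    · have hl0 : ℓ = 0 := by omega
      simp [hl0, hq0, hl0 ▸ hpl, hp0.symm]
  · have : ¬ (ℓ + ℓ' < ℓ) := by omega
    simp [this, hql]
  · intro i hi
    by_cases h1' : i + 1 < ℓ
    · have : i < ℓ := by omega
      simp only [if_pos h1', if_pos this]
      exact hps i this
    · by_cases h2' : i < ℓ
      · have he : i + 1 = ℓ := by omega
        have ht : i + 1 - ℓ = 0 := by omega
        simp only [if_pos h2', if_neg h1', ht, hq0]
        rw [← hpl, ← he]
        exact hps i h2'
      · have he : i + 1 - ℓ = (i - ℓ) + 1 := by omega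
        simp only [if_neg h1', if_neg h2', he]
        exact hqs (i - ℓ) (by omega)

lemma dirPath_wt {ψ : T → ℤ} (hψ : ∀ a b, r a b → ψ b = ψ a + 1) :
    ∀ {ℓ : ℕ} {s t : T}, DirPath r s t ℓ → ψ t = ψ s + ℓ := by
  intro ℓ
  induction ℓ with
  | zero =>
    rintro s t ⟨p, hp0, hpl, -⟩
    rw [← hpl, hp0]; simp
  | succ m ih =>
    rintro s t ⟨p, hp0, hpl, hps⟩
    have h1 : DirPath r s (p m) m := ⟨p, hp0, rfl, fun i hi => hps i (by omega)⟩
    have h2 := hψ _ _ (hps m (by omega))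
    have h3 := ih h1
    rw [← hpl, h2, h3]
    push_cast
    ring

/-- The key contradiction: if `a → b → c` along directed paths in the oriented tree
and `Nb` is a 3-element clique of common neighbours of `b` avoiding `a` and `c`,
we get a contradiction. -/
lemma middle_false {V : Type*} {n : ℕ} {G : SimpleGraph V}
    {f : V → T} {ψ : T → ℤ}
    (hψ : ∀ a b, r a b → ψ b = ψ a + 1)
    (hadj : ∀ u v : V, u ≠ v →
      (G.Adj u v ↔ ∃ ℓ, ¬ (n ∣ ℓ) ∧ (DirPath r (f u) (f v) ℓ ∨ DirPath r (f v) (f u) ℓ)))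
    (a b c : V) {ℓ1 ℓ2 : ℕ}
    (hab : DirPath r (f a) (f b) ℓ1) (hbc : DirPath r (f b) (f c) ℓ2)
    (Nb : Set V) (hNadj : ∀ u ∈ Nb, G.Adj b u)
    (hna : ∀ u ∈ Nb, u ≠ a ∧ ¬ G.Adj a u)
    (hnc : ∀ u ∈ Nb, u ≠ c ∧ ¬ G.Adj c u)
    (hclique : G.IsClique Nb) (hcard : Nb.ncard = 3) : False := by
  have F1 : ∀ p q : V, G.Adj p q → ¬ ((n:ℤ) ∣ (ψ (f p) - ψ (f q))) := by
    intro p q hpq hdvd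
    obtain ⟨ℓ, hℓ, hd⟩ := (hadj p q hpq.ne).mp hpq
    apply hℓ
    rcases hd with h | h
    · have e := dirPath_wt hψ h
      have hdiff : ψ (f p) - ψ (f q) = -(ℓ:ℤ) := by rw [e]; ring
      rw [hdiff, dvd_neg] at hdvd
      exact_mod_cast hdvd
    · have e := dirPath_wt hψ h
      have hdiff : ψ (f p) - ψ (f q) = (ℓ:ℤ) := by rw [e]; ring
      rw [hdiff] at hdvd
      exact_mod_cast hdvd
  have key : ∀ u ∈ Nb, (n:ℤ) ∣ (ψ (f u) - ψ (f a)) ∨ (n:ℤ) ∣ (ψ (f u) - ψ (f c)) := by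
    intro u hu
    have hbu := hNadj u hu
    obtain ⟨ℓ, hℓ, hd⟩ := (hadj b u hbu.ne).mp hbu
    rcases hd with h | h
    · left
      have hcat := dirPath_trans hab h
      have hdvd : n ∣ ℓ1 + ℓ := by
        by_contra hnd
        exact (hna u hu).2 ((hadj a u (hna u hu).1.symm).mpr ⟨ℓ1 + ℓ, hnd, Or.inl hcat⟩)
      have e := dirPath_wt hψ hcat
      have hdiff : ψ (f u) - ψ (f a) = ((ℓ1 + ℓ : ℕ) : ℤ) := by rw [e]; push_cast; ring
      rw [hdiff]
      exact_mod_cast hdvd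
    · right
      have hcat := dirPath_trans h hbc
      have hdvd : n ∣ ℓ + ℓ2 := by
        by_contra hnd
        exact (hnc u hu).2 ((hadj c u (hnc u hu).1.symm).mpr ⟨ℓ + ℓ2, hnd, Or.inr hcat⟩)
      have e := dirPath_wt hψ hcat
      have hdiff : ψ (f u) - ψ (f c) = -((ℓ + ℓ2 : ℕ) : ℤ) := by rw [e]; push_cast; ring
      rw [hdiff, dvd_neg]
      exact_mod_cast hdvd
  obtain ⟨u, v, w, huv, huw, hvw, hset⟩ := Set.ncard_eq_three.mp hcard
  have hu : u ∈ Nb := by rw [hset]; simp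
  have hv : v ∈ Nb := by rw [hset]; simp
  have hw : w ∈ Nb := by rw [hset]; simp
  have Auv : G.Adj u v := hclique hu hv huv
  have Auw : G.Adj u w := hclique hu hw huw
  have Avw : G.Adj v w := hclique hv hw hvw
  have sub2 : ∀ x y z : ℤ, (n:ℤ) ∣ (x - z) → (n:ℤ) ∣ (y - z) → (n:ℤ) ∣ (x - y) := by
    intro x y z h1 h2
    obtain ⟨k1, e1⟩ := h1
    obtain ⟨k2, e2⟩ := h2
    exact ⟨k1 - k2, by rw [mul_sub]; omega⟩
  rcases key u hu with h1 | h1 <;> rcases key v hv with h2 | h2 <;>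
    rcases key w hw with h3 | h3
  · exact F1 u v Auv (sub2 _ _ _ h1 h2)
  · exact F1 u v Auv (sub2 _ _ _ h1 h2)
  · exact F1 u w Auw (sub2 _ _ _ h1 h3)
  · exact F1 v w Avw (sub2 _ _ _ h2 h3)
  · exact F1 v w Avw (sub2 _ _ _ h2 h3)
  · exact F1 u w Auw (sub2 _ _ _ h1 h3)
  · exact F1 u v Auv (sub2 _ _ _ h1 h2)
  · exact F1 u v Auv (sub2 _ _ _ h1 h2)

end Aux

/-- No tall strider is a willow: a 12-vertex graph with a triangle `{x₁,x₂,x₃}` such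
that the sets `N(xᵢ) \ {x₁,x₂,x₃}` are pairwise disjoint cliques of size 3 is not a
willow. -/
theorem tall_strider_not_willow {V : Type*} [Fintype V] (G : SimpleGraph V)
    (hcard : Fintype.card V = 12)
    (x1 x2 x3 : V) (h12 : G.Adj x1 x2) (h13 : G.Adj x1 x3) (h23 : G.Adj x2 x3)
    (N1 N2 N3 : Set V)
    (hN1 : N1 = G.neighborSet x1 \ {x1, x2, x3})
    (hN2 : N2 = G.neighborSet x2 \ {x1, x2, x3})
    (hN3 : N3 = G.neighborSet x3 \ {x1, x2, x3})
    (hd12 : Disjoint N1 N2) (hd13 : Disjoint N1 N3) (hd23 : Disjoint N2 N3)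
    (hc1 : G.IsClique N1) (hc2 : G.IsClique N2) (hc3 : G.IsClique N3)
    (hn1 : N1.ncard = 3) (hn2 : N2.ncard = 3) (hn3 : N3.ncard = 3) :
    ¬ IsWillow G := by
  rintro ⟨n, hn, T, r, f, ⟨hasymm, htree⟩, hinj, hadj⟩
  obtain ⟨ψ, hψ⟩ := exists_potential hasymm htree
  -- basic facts about the neighbour sets
  have hmem : ∀ (N : Set V) (x : V), N = G.neighborSet x \ {x1, x2, x3} →
      ∀ u ∈ N, G.Adj x u ∧ u ∉ ({x1, x2, x3} : Set V) := by
    intro N x hNe u hu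
    rw [hNe] at hu
    exact ⟨hu.1, hu.2⟩
  have hnot : ∀ (Na Nb : Set V) (xa : V), Na = G.neighborSet xa \ {x1, x2, x3} →
      xa ∈ ({x1, x2, x3} : Set V) → Disjoint Na Nb →
      ∀ u ∈ Nb, u ∉ ({x1, x2, x3} : Set V) → u ≠ xa ∧ ¬ G.Adj xa u := by
    intro Na Nb xa hNae hxaC hdisj u hu huC
    constructor
    · intro h
      exact huC (h ▸ hxaC)
    · intro hA
      exact Set.disjoint_left.mp hdisj (by rw [hNae]; exact ⟨hA, huC⟩) hu
  have c1 : x1 ∈ ({x1, x2, x3} : Set V) := by simp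
  have c2 : x2 ∈ ({x1, x2, x3} : Set V) := by simp
  have c3 : x3 ∈ ({x1, x2, x3} : Set V) := by simp
  -- neighbour adjacency
  have hA1 : ∀ u ∈ N1, G.Adj x1 u := fun u hu => (hmem N1 x1 hN1 u hu).1
  have hA2 : ∀ u ∈ N2, G.Adj x2 u := fun u hu => (hmem N2 x2 hN2 u hu).1
  have hA3 : ∀ u ∈ N3, G.Adj x3 u := fun u hu => (hmem N3 x3 hN3 u hu).1
  have h2n1 : ∀ u ∈ N2, u ≠ x1 ∧ ¬ G.Adj x1 u :=
    fun u hu => hnot N1 N2 x1 hN1 c1 hd12 u hu (hmem N2 x2 hN2 u hu).2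
  have h2n3 : ∀ u ∈ N2, u ≠ x3 ∧ ¬ G.Adj x3 u :=
    fun u hu => hnot N3 N2 x3 hN3 c3 hd23.symm u hu (hmem N2 x2 hN2 u hu).2
  have h1n2 : ∀ u ∈ N1, u ≠ x2 ∧ ¬ G.Adj x2 u :=
    fun u hu => hnot N2 N1 x2 hN2 c2 hd12.symm u hu (hmem N1 x1 hN1 u hu).2
  have h1n3 : ∀ u ∈ N1, u ≠ x3 ∧ ¬ G.Adj x3 u :=
    fun u hu => hnot N3 N1 x3 hN3 c3 hd13.symm u hu (hmem N1 x1 hN1 u hu).2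
  have h3n1 : ∀ u ∈ N3, u ≠ x1 ∧ ¬ G.Adj x1 u :=
    fun u hu => hnot N1 N3 x1 hN1 c1 hd13 u hu (hmem N3 x3 hN3 u hu).2
  have h3n2 : ∀ u ∈ N3, u ≠ x2 ∧ ¬ G.Adj x2 u :=
    fun u hu => hnot N2 N3 x2 hN2 c2 hd23 u hu (hmem N3 x3 hN3 u hu).2
  -- directed paths among the triangle
  obtain ⟨la, hla, da⟩ := (hadj x1 x2 h12.ne).mp h12
  obtain ⟨lb, hlb, db⟩ := (hadj x1 x3 h13.ne).mp h13
  obtain ⟨lc, hlc, dc⟩ := (hadj x2 x3 h23.ne).mp h23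
  have hla0 : la ≠ 0 := fun h => hla (h ▸ dvd_zero n)
  have hlb0 : lb ≠ 0 := fun h => hlb (h ▸ dvd_zero n)
  have hlc0 : lc ≠ 0 := fun h => hlc (h ▸ dvd_zero n)
  rcases da with da | da <;> rcases db with db | db <;> rcases dc with dc | dc
  · -- 1→2, 1→3, 2→3 : middle x2
    exact middle_false hψ hadj x1 x2 x3 da dc N2 hA2 h2n1 h2n3 hc2 hn2
  · -- 1→2, 1→3, 3→2 : middle x3
    exact middle_false hψ hadj x1 x3 x2 db dc N3 hA3 h3n1 h3n2 hc3 hn3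
  · -- 1→2, 3→1, 2→3 : cycle
    have e1 := dirPath_wt hψ da
    have e2 := dirPath_wt hψ dc
    have e3 := dirPath_wt hψ db
    omega
  · -- 1→2, 3→1, 3→2 : middle x1
    exact middle_false hψ hadj x3 x1 x2 db da N1 hA1 h1n3 h1n2 hc1 hn1
  · -- 2→1, 1→3, 2→3 : middle x1
    exact middle_false hψ hadj x2 x1 x3 da db N1 hA1 h1n2 h1n3 hc1 hn1
  · -- 2→1, 1→3, 3→2 : cycle
    have e1 := dirPath_wt hψ db
    have e2 := dirPath_wt hψ dc
    have e3 := dirPath_wt hψ da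
    omega
  · -- 2→1, 3→1, 2→3 : middle x3
    exact middle_false hψ hadj x2 x3 x1 dc db N3 hA3 h3n2 h3n1 hc3 hn3
  · -- 2→1, 3→1, 3→2 : middle x2
    exact middle_false hψ hadj x3 x2 x1 dc da N2 hA2 h2n3 h2n1 hc2 hn2
end

section
/- Let G be a graph containing three vertex-disjoint induced paths of length 2 whose middle vertices each have degree exactly 2 in G. Then the complement of G is not a willow. In particular, the complement of the path P_9 on nine vertices is not a willow. -/
section Helpers

variable {T : Type*} {r : T → T → Prop}

/-- A chain of length `L` in `r`. -/
def RChain (r : T → T → Prop) (p : ℕ → T) (L : ℕ) : Prop := ∀ i < L, r (p i) (p (i + 1))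

lemma rchain_shift {p : ℕ → T} {L : ℕ} (h : RChain r p (L + 1)) :
    RChain r (fun i => p (i + 1)) L := fun i hi => h (i + 1) (by omega)

lemma rchain_seg {p : ℕ → T} {L : ℕ} (h : RChain r p L) {i j : ℕ} (hij : i ≤ j) (hj : j ≤ L) :
    DirPath r (p i) (p j) (j - i) := by
  refine ⟨fun k => p (i + k), by simp, by show p (i + (j - i)) = p j; rw [Nat.add_sub_cancel' hij], fun k hk => ?_⟩
  show r (p (i + k)) (p (i + (k + 1)))
  have e : i + (k + 1) = (i + k) + 1 := by omega
  rw [e]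
  exact h (i + k) (by omega)

lemma rchain_append {p q : ℕ → T} {k l : ℕ} (hp : RChain r p k) (hq : RChain r q l)
    (hpq : p k = q 0) :
    ∃ s : ℕ → T, RChain r s (k + l) ∧ s 0 = p 0 ∧ s k = p k ∧ s (k + l) = q l := by
  refine ⟨fun i => if i ≤ k then p i else q (i - k), ?_, by simp, by simp, ?_⟩
  · intro i hi
    rcases lt_trichotomy i k with h | h | h
    · have h1 : i ≤ k := by omega
      have h2 : i + 1 ≤ k := by omega
      simp only [h1, h2, if_pos]
      exact hp i h
    · subst h
      have hl : 0 < l := by omega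
      have h2 : ¬ (i + 1 ≤ i) := by omega
      simp only [le_refl, if_pos, h2, if_neg, Nat.add_sub_cancel_left]
      rw [hpq]
      exact hq 0 hl
    · have h1 : ¬ (i ≤ k) := by omega
      have h2 : ¬ (i + 1 ≤ k) := by omega
      simp only [h1, h2, if_neg]
      have e : i + 1 - k = (i - k) + 1 := by omega
      rw [e]
      exact hq (i - k) (by omega)
  · by_cases hl : l = 0
    · subst hl; simp [hpq]
    · have h1 : ¬ (k + l ≤ k) := by omega
      simp [h1]

lemma rchain_reach (hT : IsOrientedTree r) (e : Sym2 T) {p : ℕ → T} {L : ℕ} (hp : RChain r p L)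
    (he : ∀ i < L, s(p i, p (i + 1)) ≠ e) :
    ((SimpleGraph.fromRel r) \ SimpleGraph.fromEdgeSet {e}).Reachable (p 0) (p L) := by
  induction L with
  | zero => exact SimpleGraph.Reachable.refl _
  | succ L ih =>
    have h1 := ih (fun i hi => hp i (by omega)) (fun i hi => he i (by omega))
    refine h1.trans (SimpleGraph.Adj.reachable ?_)
    have hr := hp L (by omega)
    have hne : p L ≠ p (L + 1) := by
      intro hcontra
      exact hT.asymm _ _ hr (hcontra ▸ hr)
    rw [SimpleGraph.sdiff_adj]
    constructor
    · exact (SimpleGraph.fromRel_adj r _ _).mpr ⟨hne, Or.inl hr⟩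
    · rw [SimpleGraph.fromEdgeSet_adj]
      rintro ⟨hmem, -⟩
      exact he L (by omega) (Set.mem_singleton_iff.mp hmem)

lemma rchain_closed (hT : IsOrientedTree r) :
    ∀ L : ℕ, ∀ p : ℕ → T, RChain r p L → p L = p 0 → L = 0 := by
  intro L
  induction L using Nat.strong_induction_on with
  | _ L ih =>
    intro p hp hcl
    by_contra hL0
    have hL : 0 < L := Nat.pos_of_ne_zero hL0
    have hr01 := hp 0 hL
    have hne01 : p 0 ≠ p 1 := fun h => hT.asymm _ _ hr01 (h ▸ hr01)
    have hadj : (SimpleGraph.fromRel r).Adj (p 0) (p 1) :=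
      (SimpleGraph.fromRel_adj r _ _).mpr ⟨hne01, Or.inl hr01⟩
    have hbridge := (SimpleGraph.isAcyclic_iff_forall_adj_isBridge.mp hT.tree.IsAcyclic) hadj
    rw [SimpleGraph.isBridge_iff] at hbridge
    by_cases hcase : ∀ i, 1 ≤ i → i < L → s(p i, p (i + 1)) ≠ s(p 0, p 1)
    · -- tail avoids the edge; contradiction with bridge
      have hreach := rchain_reach hT s(p 0, p 1) (p := fun i => p (i + 1)) (L := L - 1)
        (fun i hi => hp (i + 1) (by omega)) (fun i hi => hcase (i + 1) (by omega) (by omega))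
      have hend : (L - 1) + 1 = L := by omega
      have hreach' : ((SimpleGraph.fromRel r) \ SimpleGraph.fromEdgeSet {s(p 0, p 1)}).Reachable (p 1) (p 0) := by
        simpa [hend, hcl] using hreach
      exact hbridge hreach'.symm
    · push_neg at hcase
      obtain ⟨i, hi1, hiL, hie⟩ := hcase
      rw [Sym2.eq_iff] at hie
      rcases hie with ⟨hia, _⟩ | ⟨hia, hib⟩
      · -- p i = p 0 : shorter closed chain
        have := ih i hiL p (fun j hj => hp j (by omega)) hia
        omega
      · -- p i = p 1, p (i+1) = p 0 : r (p 1) (p 0), contradiction with asymmetry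
        have hr := hp i hiL
        rw [hia, hib] at hr
        exact hT.asymm _ _ hr01 hr

lemma rchain_merge (hT : IsOrientedTree r) {p q : ℕ → T} {L L' : ℕ}
    (hp : RChain r p L) (hq : RChain r q L') (h0 : p 0 = q 0) (h1 : p L = q L')
    (hL : 0 < L) (hL' : 0 < L') : p 1 = q 1 := by
  by_contra hne
  have hr01 := hp 0 hL
  have hrq01 := hq 0 hL'
  rw [← h0] at hrq01
  have hne01 : p 0 ≠ p 1 := fun h => hT.asymm _ _ hr01 (h ▸ hr01)
  have hneq1 : p 0 ≠ q 1 := fun h => hT.asymm _ _ hrq01 (h ▸ hrq01)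
  have hadj : (SimpleGraph.fromRel r).Adj (p 0) (p 1) :=
    (SimpleGraph.fromRel_adj r _ _).mpr ⟨hne01, Or.inl hr01⟩
  have hbridge := (SimpleGraph.isAcyclic_iff_forall_adj_isBridge.mp hT.tree.IsAcyclic) hadj
  rw [SimpleGraph.isBridge_iff] at hbridge
  -- no vertex of the p-tail equals p 0
  have hptail : ∀ i, 1 ≤ i → i ≤ L → p i ≠ p 0 := by
    intro i hi1 hiL hcontra
    have := rchain_closed hT i p (fun j hj => hp j (by omega)) hcontra
    omega
  have hqtail : ∀ i, 1 ≤ i → i ≤ L' → q i ≠ q 0 := by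
    intro i hi1 hiL hcontra
    have := rchain_closed hT i q (fun j hj => hq j (by omega)) hcontra
    omega
  -- p-tail reachability avoiding e
  have hreachp := rchain_reach hT s(p 0, p 1) (p := fun i => p (i + 1)) (L := L - 1)
    (fun i hi => hp (i + 1) (by omega))
    (by
      intro i hi hcontra
      rw [Sym2.eq_iff] at hcontra
      rcases hcontra with ⟨hia, _⟩ | ⟨_, hib⟩
      · exact hptail (i + 1) (by omega) (by omega) hia
      · exact hptail (i + 2) (by omega) (by omega) hib)
  have hreachq := rchain_reach hT s(p 0, p 1) (p := fun i => q (i + 1)) (L := L' - 1)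
    (fun i hi => hq (i + 1) (by omega))
    (by
      intro i hi hcontra
      rw [Sym2.eq_iff] at hcontra
      rcases hcontra with ⟨hia, _⟩ | ⟨hia, hib⟩
      · exact hqtail (i + 1) (by omega) (by omega) (h0 ▸ hia)
      · exact hqtail (i + 2) (by omega) (by omega) (h0 ▸ hib))
  have hendp : (L - 1) + 1 = L := by omega
  have hendq : (L' - 1) + 1 = L' := by omega
  have hreachp : ((SimpleGraph.fromRel r) \ SimpleGraph.fromEdgeSet {s(p 0, p 1)}).Reachable (p 1) (p L) := by
    simpa [hendp] using hreachp
  have hreachq : ((SimpleGraph.fromRel r) \ SimpleGraph.fromEdgeSet {s(p 0, p 1)}).Reachable (q 1) (p L) := by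
    simpa [hendq, ← h1] using hreachq
  -- edge from q 1 to p 0 in the deleted graph
  have hadjq : ((SimpleGraph.fromRel r) \ SimpleGraph.fromEdgeSet {s(p 0, p 1)}).Adj (q 1) (p 0) := by
    rw [SimpleGraph.sdiff_adj]
    constructor
    · exact ((SimpleGraph.fromRel_adj r _ _).mpr ⟨hneq1, Or.inl hrq01⟩).symm
    · rw [SimpleGraph.fromEdgeSet_adj]
      rintro ⟨hmem, -⟩
      rw [Set.mem_singleton_iff, Sym2.eq_iff] at hmem
      rcases hmem with ⟨hia, hib⟩ | ⟨hia, _⟩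
      · exact hne01 hib
      · exact hne hia.symm
  have : ((SimpleGraph.fromRel r) \ SimpleGraph.fromEdgeSet {s(p 0, p 1)}).Reachable (p 0) (p 1) :=
    ((hreachp.trans hreachq.symm).trans hadjq.reachable).symm
  exact hbridge this

lemma rchain_uniq (hT : IsOrientedTree r) :
    ∀ L : ℕ, ∀ L' : ℕ, ∀ p q : ℕ → T, RChain r p L → RChain r q L' →
      p 0 = q 0 → p L = q L' → L = L' ∧ ∀ i ≤ L, p i = q i := by
  intro L
  induction L with
  | zero =>
    intro L' p q hp hq h0 h1
    have : q L' = q 0 := by rw [← h1, h0]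
    have hL' := rchain_closed hT L' q hq this
    refine ⟨hL'.symm, fun i hi => ?_⟩
    have hi0 : i = 0 := by omega
    subst hi0
    exact h0
  | succ L ih =>
    intro L' p q hp hq h0 h1
    rcases Nat.eq_zero_or_pos L' with hL' | hL'
    · subst hL'
      have : p (L + 1) = p 0 := by rw [h1, h0]
      have := rchain_closed hT (L + 1) p hp this
      omega
    · have h11 := rchain_merge hT hp hq h0 h1 (by omega) hL'
      obtain ⟨hlen, hpt⟩ := ih (L' - 1) (fun i => p (i + 1)) (fun i => q (i + 1))
        (rchain_shift hp)
        (fun i hi => hq (i + 1) (by omega)) h11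
        (by
          show p (L + 1) = q ((L' - 1) + 1)
          rw [h1]; congr 1; omega)
      refine ⟨by omega, fun i hi => ?_⟩
      match i with
      | 0 => exact h0
      | (j + 1) => exact hpt j (by omega)

lemma dp_trans {u v w : T} {k l : ℕ} (h1 : DirPath r u v k) (h2 : DirPath r v w l) :
    DirPath r u w (k + l) := by
  obtain ⟨p, hp0, hpk, hp⟩ := h1
  obtain ⟨q, hq0, hql, hq⟩ := h2
  obtain ⟨s, hs, hs0, _, hsE⟩ := rchain_append hp hq (by rw [hpk, hq0])
  exact ⟨s, by rw [hs0, hp0], by rw [hsE, hql], hs⟩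

lemma dp_zero {u v : T} (h : DirPath r u v 0) : u = v := by
  obtain ⟨p, hp0, hpk, _⟩ := h
  rw [← hp0, ← hpk]

lemma dp_closed (hT : IsOrientedTree r) {u : T} {k : ℕ} (h : DirPath r u u k) : k = 0 := by
  obtain ⟨p, hp0, hpk, hp⟩ := h
  exact rchain_closed hT k p hp (by rw [hp0, hpk])

lemma dp_uniq (hT : IsOrientedTree r) {u v : T} {k l : ℕ}
    (h1 : DirPath r u v k) (h2 : DirPath r u v l) : k = l := by
  obtain ⟨p, hp0, hpk, hp⟩ := h1
  obtain ⟨q, hq0, hql, hq⟩ := h2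
  exact (rchain_uniq hT k l p q hp hq (by rw [hp0, hq0]) (by rw [hpk, hql])).1

lemma univ_of_exhibit (hT : IsOrientedTree r) {U W : T} {m n : ℕ}
    (hm : DirPath r U W m) (hdm : n ∣ m) (hUW : U ≠ W) :
    ∀ ℓ, (DirPath r U W ℓ ∨ DirPath r W U ℓ) → n ∣ ℓ := by
  intro ℓ h
  rcases h with h | h
  · rwa [dp_uniq hT h hm]
  · exfalso
    have hc := dp_closed hT (dp_trans hm h)
    have hm0 : m = 0 := by omega
    exact hUW (dp_zero (hm0 ▸ hm))

end Helpers

section Middle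

variable {T : Type*} {r : T → T → Prop} {n : ℕ}

lemma natdvd_of_int {n ℓ : ℕ} (h : (n : ℤ) ∣ (ℓ : ℤ)) : n ∣ ℓ := Int.natCast_dvd_natCast.mp h

lemma intdvd_of_nat {n ℓ : ℕ} (h : n ∣ ℓ) : (n : ℤ) ∣ (ℓ : ℤ) := Int.natCast_dvd_natCast.mpr h

lemma middle_contra (hT : IsOrientedTree r)
    {Vp Vm Vq U W : T} {a b : ℕ}
    (hpm : DirPath r Vp Vm a) (hmq : DirPath r Vm Vq b)
    (hUW : U ≠ W)
    (NU : ∀ ℓ, DirPath r Vm U ℓ ∨ DirPath r U Vm ℓ → n ∣ ℓ)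
    (NW : ∀ ℓ, DirPath r Vm W ℓ ∨ DirPath r W Vm ℓ → n ∣ ℓ)
    (AUp : ∃ ℓ, ¬ n ∣ ℓ ∧ (DirPath r U Vp ℓ ∨ DirPath r Vp U ℓ))
    (AUq : ∃ ℓ, ¬ n ∣ ℓ ∧ (DirPath r U Vq ℓ ∨ DirPath r Vq U ℓ))
    (AWp : ∃ ℓ, ¬ n ∣ ℓ ∧ (DirPath r W Vp ℓ ∨ DirPath r Vp W ℓ))
    (AWq : ∃ ℓ, ¬ n ∣ ℓ ∧ (DirPath r W Vq ℓ ∨ DirPath r Vq W ℓ))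
    (AUW : ∃ ℓ, ¬ n ∣ ℓ ∧ (DirPath r U W ℓ ∨ DirPath r W U ℓ)) : False := by
  -- the profile of a vertex not adjacent to the middle but adjacent to both ends
  have prof : ∀ X : T, (∀ ℓ, DirPath r Vm X ℓ ∨ DirPath r X Vm ℓ → n ∣ ℓ) →
      (∃ ℓ, ¬ n ∣ ℓ ∧ (DirPath r X Vp ℓ ∨ DirPath r Vp X ℓ)) →
      (∃ ℓ, ¬ n ∣ ℓ ∧ (DirPath r X Vq ℓ ∨ DirPath r Vq X ℓ)) →
      (∃ δ, DirPath r X Vp δ ∧ (n : ℤ) ∣ ((δ : ℤ) + a)) ∨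
      (∃ δ, DirPath r Vq X δ ∧ (n : ℤ) ∣ ((δ : ℤ) + b)) ∨
      (∃ x y, DirPath r Vp X x ∧ DirPath r X Vq y ∧ x + y = a + b ∧
        (n : ℤ) ∣ ((x : ℤ) - a)) := by
    intro X NX AXp AXq
    obtain ⟨ℓp, hnp, dp⟩ := AXp
    obtain ⟨ℓq, hnq, dq⟩ := AXq
    rcases dp with dp | dp
    · -- X → Vp : profile B
      left
      refine ⟨ℓp, dp, ?_⟩
      have h1 : DirPath r X Vm (ℓp + a) := dp_trans dp hpm
      have h2 : n ∣ (ℓp + a) := NX _ (Or.inr h1)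
      have := intdvd_of_nat h2
      push_cast at this ⊢
      exact this
    · rcases dq with dq | dq
      · -- Vp → X and X → Vq : profile A
        right; right
        refine ⟨ℓp, ℓq, dp, dq, ?_, ?_⟩
        · -- lengths agree by uniqueness of directed paths
          exact dp_uniq hT (dp_trans dp dq) (dp_trans hpm hmq)
        · -- the distance to the middle is divisible
          obtain ⟨p1, hp10, hp1x, hp1⟩ := dp
          obtain ⟨p2, hp20, hp2y, hp2⟩ := dq
          obtain ⟨s, hs, hs0, hsx, hsE⟩ := rchain_append hp1 hp2 (by rw [hp1x, hp20])
          obtain ⟨q1, hq10, hq1a, hq1⟩ := hpm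
          obtain ⟨q2, hq20, hq2b, hq2⟩ := hmq
          obtain ⟨t, ht, ht0, hta, htE⟩ := rchain_append hq1 hq2 (by rw [hq1a, hq20])
          obtain ⟨hlen, hpt⟩ := rchain_uniq hT (ℓp + ℓq) (a + b) s t hs ht
            (by rw [hs0, ht0, hp10, hq10]) (by rw [hsE, htE, hp2y, hq2b])
          -- s ℓp = X, t a = Vm and s = t pointwise
          rcases le_total ℓp a with hle | hle
          · have hseg := rchain_seg ht hle (by omega)
            rw [hta, hq1a] at hseg
            have hXt : t ℓp = X := by rw [← hpt ℓp (by omega), hsx, hp1x]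
            rw [hXt] at hseg
            have hdvd : n ∣ (a - ℓp) := NX _ (Or.inr hseg)
            have := intdvd_of_nat hdvd
            rw [Nat.cast_sub hle] at this
            have e : ((ℓp : ℤ) - a) = -((a : ℤ) - ℓp) := by ring
            rw [e]
            exact dvd_neg.mpr this
          · have hseg := rchain_seg ht hle (by omega)
            rw [hta, hq1a] at hseg
            have hXt : t ℓp = X := by rw [← hpt ℓp (by omega), hsx, hp1x]
            rw [hXt] at hseg
            have hdvd : n ∣ (ℓp - a) := NX _ (Or.inl hseg)
            have := intdvd_of_nat hdvd
            rwa [Nat.cast_sub hle] at this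
      · -- Vq → X : profile C
        right; left
        refine ⟨ℓq, dq, ?_⟩
        have h1 : DirPath r Vm X (b + ℓq) := dp_trans hmq dq
        have h2 : n ∣ (b + ℓq) := NX _ (Or.inl h1)
        have := intdvd_of_nat h2
        push_cast at this ⊢
        rwa [add_comm]
  have profU := prof U NU AUp AUq
  have profW := prof W NW AWp AWq
  -- In every case any directed path between U and W has length divisible by n
  have hall : ∀ ℓ, (DirPath r U W ℓ ∨ DirPath r W U ℓ) → n ∣ ℓ := by
    rcases profU with ⟨δ, hB, hdB⟩ | ⟨δ, hC, hdC⟩ | ⟨x, y, hx, hy, hsum, hdx⟩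
    · rcases profW with ⟨δ', hB', hdB'⟩ | ⟨δ', hC', hdC'⟩ | ⟨x', y', hx', hy', hsum', hdx'⟩
      · -- (B, B)
        intro ℓ h
        rcases h with h | h
        · have he := dp_uniq hT (dp_trans h hB') hB
          apply natdvd_of_int
          have e : (ℓ : ℤ) = ((δ : ℤ) + a) - ((δ' : ℤ) + a) := by push_cast; omega
          rw [e]; exact dvd_sub hdB hdB'
        · have he := dp_uniq hT (dp_trans h hB) hB'
          apply natdvd_of_int
          have e : (ℓ : ℤ) = ((δ' : ℤ) + a) - ((δ : ℤ) + a) := by push_cast; omega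
          rw [e]; exact dvd_sub hdB' hdB
      · -- (B, C): exhibit U → W
        have hm : DirPath r U W (((δ + a) + b) + δ') :=
          dp_trans (dp_trans (dp_trans hB hpm) hmq) hC'
        have hdm : n ∣ (((δ + a) + b) + δ') := by
          apply natdvd_of_int
          have e : ((((δ + a) + b) + δ' : ℕ) : ℤ) = ((δ : ℤ) + a) + ((δ' : ℤ) + b) := by
            push_cast; ring
          rw [e]; exact dvd_add hdB hdC'
        exact univ_of_exhibit hT hm hdm hUW
      · -- (B, A): exhibit U → W via Vp
        have hm : DirPath r U W (δ + x') := dp_trans hB hx'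
        have hdm : n ∣ (δ + x') := by
          apply natdvd_of_int
          have e : ((δ + x' : ℕ) : ℤ) = ((δ : ℤ) + a) + ((x' : ℤ) - a) := by push_cast; ring
          rw [e]; exact dvd_add hdB hdx'
        exact univ_of_exhibit hT hm hdm hUW
    · rcases profW with ⟨δ', hB', hdB'⟩ | ⟨δ', hC', hdC'⟩ | ⟨x', y', hx', hy', hsum', hdx'⟩
      · -- (C, B): exhibit W → U
        have hm : DirPath r W U (((δ' + a) + b) + δ) :=
          dp_trans (dp_trans (dp_trans hB' hpm) hmq) hC
        have hdm : n ∣ (((δ' + a) + b) + δ) := by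
          apply natdvd_of_int
          have e : ((((δ' + a) + b) + δ : ℕ) : ℤ) = ((δ' : ℤ) + a) + ((δ : ℤ) + b) := by
            push_cast; ring
          rw [e]; exact dvd_add hdB' hdC
        intro ℓ h
        exact univ_of_exhibit hT hm hdm hUW.symm ℓ h.symm
      · -- (C, C)
        intro ℓ h
        rcases h with h | h
        · have he := dp_uniq hT (dp_trans hC h) hC'
          apply natdvd_of_int
          have e : (ℓ : ℤ) = ((δ' : ℤ) + b) - ((δ : ℤ) + b) := by push_cast; omega
          rw [e]; exact dvd_sub hdC' hdC
        · have he := dp_uniq hT (dp_trans hC' h) hC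
          apply natdvd_of_int
          have e : (ℓ : ℤ) = ((δ : ℤ) + b) - ((δ' : ℤ) + b) := by push_cast; omega
          rw [e]; exact dvd_sub hdC hdC'
      · -- (C, A): exhibit W → U via Vq
        have hm : DirPath r W U (y' + δ) := dp_trans hy' hC
        have hdm : n ∣ (y' + δ) := by
          apply natdvd_of_int
          have hsumZ : (x' : ℤ) + y' = (a : ℤ) + b := by exact_mod_cast hsum'
          have e : ((y' + δ : ℕ) : ℤ) = ((δ : ℤ) + b) + (-(((x' : ℤ) - a))) := by
            push_cast; omega
          rw [e]; exact dvd_add hdC (dvd_neg.mpr hdx')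
        intro ℓ h
        exact univ_of_exhibit hT hm hdm hUW.symm ℓ h.symm
    · rcases profW with ⟨δ', hB', hdB'⟩ | ⟨δ', hC', hdC'⟩ | ⟨x', y', hx', hy', hsum', hdx'⟩
      · -- (A, B): exhibit W → U via Vp
        have hm : DirPath r W U (δ' + x) := dp_trans hB' hx
        have hdm : n ∣ (δ' + x) := by
          apply natdvd_of_int
          have e : ((δ' + x : ℕ) : ℤ) = ((δ' : ℤ) + a) + ((x : ℤ) - a) := by push_cast; ring
          rw [e]; exact dvd_add hdB' hdx
        intro ℓ h
        exact univ_of_exhibit hT hm hdm hUW.symm ℓ h.symm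
      · -- (A, C): exhibit U → W via Vq
        have hm : DirPath r U W (y + δ') := dp_trans hy hC'
        have hdm : n ∣ (y + δ') := by
          apply natdvd_of_int
          have hsumZ : (x : ℤ) + y = (a : ℤ) + b := by exact_mod_cast hsum
          have e : ((y + δ' : ℕ) : ℤ) = ((δ' : ℤ) + b) + (-(((x : ℤ) - a))) := by
            push_cast; omega
          rw [e]; exact dvd_add hdC' (dvd_neg.mpr hdx)
        exact univ_of_exhibit hT hm hdm hUW
      · -- (A, A)
        obtain ⟨p1, hp10, hp1x, hp1⟩ := hx
        obtain ⟨p2, hp20, hp2y, hp2⟩ := hy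
        obtain ⟨s, hs, hs0, hsx, hsE⟩ := rchain_append hp1 hp2 (by rw [hp1x, hp20])
        obtain ⟨q1, hq10, hq1x, hq1⟩ := hx'
        obtain ⟨q2, hq20, hq2y, hq2⟩ := hy'
        obtain ⟨t, ht, ht0, htx, htE⟩ := rchain_append hq1 hq2 (by rw [hq1x, hq20])
        obtain ⟨hlen, hpt⟩ := rchain_uniq hT (x + y) (x' + y') s t hs ht
          (by rw [hs0, ht0, hp10, hq10]) (by rw [hsE, htE, hp2y, hq2y])
        have hsxU : s x = U := by rw [hsx, hp1x]
        have htxW : t x' = W := by rw [htx, hq1x]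
        rcases le_total x x' with hle | hle
        · have hseg := rchain_seg ht hle (by omega)
          have hUt : t x = U := by rw [← hpt x (by omega), hsxU]
          rw [hUt, htxW] at hseg
          have hdm : n ∣ (x' - x) := by
            apply natdvd_of_int
            rw [Nat.cast_sub hle]
            have e : ((x' : ℤ) - x) = ((x' : ℤ) - a) - ((x : ℤ) - a) := by ring
            rw [e]; exact dvd_sub hdx' hdx
          exact univ_of_exhibit hT hseg hdm hUW
        · have hseg := rchain_seg hs hle (by omega)
          have hWs : s x' = W := by rw [hpt x' (by omega), htxW]
          rw [hWs, hsxU] at hseg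
          have hdm : n ∣ (x - x') := by
            apply natdvd_of_int
            rw [Nat.cast_sub hle]
            have e : ((x : ℤ) - x') = ((x : ℤ) - a) - ((x' : ℤ) - a) := by ring
            rw [e]; exact dvd_sub hdx hdx'
          intro ℓ h
          exact univ_of_exhibit hT hseg hdm hUW.symm ℓ h.symm
  obtain ⟨ℓ, hnl, hd⟩ := AUW
  exact hnl (hall ℓ hd)

end Middle

set_option maxHeartbeats 2000000 in
lemma general_not_willow {V : Type*} (G : SimpleGraph V)
    (u1 v1 w1 u2 v2 w2 u3 v3 w3 : V)
    (hdist : List.Pairwise (· ≠ ·) [u1, v1, w1, u2, v2, w2, u3, v3, w3])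
    (h1a : G.Adj u1 v1) (h1b : G.Adj v1 w1) (h1c : ¬ G.Adj u1 w1)
    (h2a : G.Adj u2 v2) (h2b : G.Adj v2 w2) (h2c : ¬ G.Adj u2 w2)
    (h3a : G.Adj u3 v3) (h3b : G.Adj v3 w3) (h3c : ¬ G.Adj u3 w3)
    (hdeg1 : G.neighborSet v1 = {u1, w1})
    (hdeg2 : G.neighborSet v2 = {u2, w2})
    (hdeg3 : G.neighborSet v3 = {u3, w3}) :
    ¬ IsWillow Gᶜ := by
  rintro ⟨n, hn, T, r, f, hOT, hinj, hiff⟩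
  simp only [List.pairwise_cons, List.mem_cons, List.not_mem_nil, or_false, List.mem_singleton,
    List.Pairwise.nil, and_true] at hdist
  obtain ⟨h1, h2, h3, h4⟩ := hdist
  obtain ⟨h5, h6, h7, h8, h9, -⟩ := h4
  -- distinctness facts
  have d_u1v1 : u1 ≠ v1 := h1 v1 (by tauto)
  have d_u1w1 : u1 ≠ w1 := h1 w1 (by tauto)
  have d_u1u2 : u1 ≠ u2 := h1 u2 (by tauto)
  have d_u1v2 : u1 ≠ v2 := h1 v2 (by tauto)
  have d_u1w2 : u1 ≠ w2 := h1 w2 (by tauto)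
  have d_u1u3 : u1 ≠ u3 := h1 u3 (by tauto)
  have d_u1v3 : u1 ≠ v3 := h1 v3 (by tauto)
  have d_u1w3 : u1 ≠ w3 := h1 w3 (by tauto)
  have d_v1w1 : v1 ≠ w1 := h2 w1 (by tauto)
  have d_v1u2 : v1 ≠ u2 := h2 u2 (by tauto)
  have d_v1v2 : v1 ≠ v2 := h2 v2 (by tauto)
  have d_v1w2 : v1 ≠ w2 := h2 w2 (by tauto)
  have d_v1u3 : v1 ≠ u3 := h2 u3 (by tauto)
  have d_v1v3 : v1 ≠ v3 := h2 v3 (by tauto)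
  have d_v1w3 : v1 ≠ w3 := h2 w3 (by tauto)
  have d_w1u2 : w1 ≠ u2 := h3 u2 (by tauto)
  have d_w1v2 : w1 ≠ v2 := h3 v2 (by tauto)
  have d_w1w2 : w1 ≠ w2 := h3 w2 (by tauto)
  have d_w1u3 : w1 ≠ u3 := h3 u3 (by tauto)
  have d_w1v3 : w1 ≠ v3 := h3 v3 (by tauto)
  have d_w1w3 : w1 ≠ w3 := h3 w3 (by tauto)
  have d_u2v2 : u2 ≠ v2 := h5 v2 (by tauto)
  have d_u2w2 : u2 ≠ w2 := h5 w2 (by tauto)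
  have d_u2u3 : u2 ≠ u3 := h5 u3 (by tauto)
  have d_u2v3 : u2 ≠ v3 := h5 v3 (by tauto)
  have d_u2w3 : u2 ≠ w3 := h5 w3 (by tauto)
  have d_v2w2 : v2 ≠ w2 := h6 w2 (by tauto)
  have d_v2u3 : v2 ≠ u3 := h6 u3 (by tauto)
  have d_v2v3 : v2 ≠ v3 := h6 v3 (by tauto)
  have d_v2w3 : v2 ≠ w3 := h6 w3 (by tauto)
  have d_w2u3 : w2 ≠ u3 := h7 u3 (by tauto)
  have d_w2v3 : w2 ≠ v3 := h7 v3 (by tauto)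
  have d_w2w3 : w2 ≠ w3 := h7 w3 (by tauto)
  have d_u3v3 : u3 ≠ v3 := h8 v3 (by tauto)
  have d_u3w3 : u3 ≠ w3 := h8 w3 (by tauto)
  have d_v3w3 : v3 ≠ w3 := h9 w3 rfl
  -- non-adjacency of the middle vertices (in G) to everything except their own ends
  have nGadj1 : ∀ x : V, x ≠ u1 → x ≠ w1 → ¬ G.Adj v1 x := by
    intro x hx1 hx2 h
    have hx : x ∈ G.neighborSet v1 := h
    rw [hdeg1] at hx
    rcases hx with hx | hx
    · exact hx1 hx
    · exact hx2 hx
  have nGadj2 : ∀ x : V, x ≠ u2 → x ≠ w2 → ¬ G.Adj v2 x := by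
    intro x hx1 hx2 h
    have hx : x ∈ G.neighborSet v2 := h
    rw [hdeg2] at hx
    rcases hx with hx | hx
    · exact hx1 hx
    · exact hx2 hx
  have nGadj3 : ∀ x : V, x ≠ u3 → x ≠ w3 → ¬ G.Adj v3 x := by
    intro x hx1 hx2 h
    have hx : x ∈ G.neighborSet v3 := h
    rw [hdeg3] at hx
    rcases hx with hx | hx
    · exact hx1 hx
    · exact hx2 hx
  -- adjacency in the complement gives a directed path of non-divisible length
  have mk : ∀ {x y : V}, x ≠ y → ¬ G.Adj x y →
      ∃ ℓ, ¬ n ∣ ℓ ∧ (DirPath r (f x) (f y) ℓ ∨ DirPath r (f y) (f x) ℓ) := by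
    intro x y hxy hna
    exact (hiff x y hxy).mp ((SimpleGraph.compl_adj G x y).mpr ⟨hxy, hna⟩)
  -- non-adjacency in the complement gives universal divisibility
  have nk : ∀ {x y : V}, x ≠ y → G.Adj x y →
      ∀ ℓ, (DirPath r (f x) (f y) ℓ ∨ DirPath r (f y) (f x) ℓ) → n ∣ ℓ := by
    intro x y hxy hadj ℓ hd
    by_contra hnd
    have hc := (hiff x y hxy).mpr ⟨ℓ, hnd, hd⟩
    rw [SimpleGraph.compl_adj] at hc
    exact hc.2 hadj
  -- universal divisibility facts (middles with their own ends)
  have Nu1 := nk d_u1v1.symm h1a.symm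
  have Nw1 := nk d_v1w1 h1b
  have Nu2 := nk d_u2v2.symm h2a.symm
  have Nw2 := nk d_v2w2 h2b
  have Nu3 := nk d_u3v3.symm h3a.symm
  have Nw3 := nk d_v3w3 h3b
  -- complement adjacency existentials
  have Euw1 := mk d_u1w1 h1c
  have Euw2 := mk d_u2w2 h2c
  have Euw3 := mk d_u3w3 h3c
  have Ev12 := mk d_v1v2 (nGadj1 v2 d_u1v2.symm d_w1v2.symm)
  have Ev13 := mk d_v1v3 (nGadj1 v3 d_u1v3.symm d_w1v3.symm)
  have Ev23 := mk d_v2v3 (nGadj2 v3 d_u2v3.symm d_w2v3.symm)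
  have Eu1v2 := mk d_u1v2 (fun h => nGadj2 u1 d_u1u2 d_u1w2 h.symm)
  have Eu1v3 := mk d_u1v3 (fun h => nGadj3 u1 d_u1u3 d_u1w3 h.symm)
  have Ew1v2 := mk d_w1v2 (fun h => nGadj2 w1 d_w1u2 d_w1w2 h.symm)
  have Ew1v3 := mk d_w1v3 (fun h => nGadj3 w1 d_w1u3 d_w1w3 h.symm)
  have Eu2v1 := mk d_v1u2.symm (fun h => (nGadj1 u2 d_u1u2.symm d_w1u2.symm) h.symm)
  have Eu2v3 := mk d_u2v3 (fun h => nGadj3 u2 d_u2u3 d_u2w3 h.symm)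
  have Ew2v1 := mk d_v1w2.symm (fun h => (nGadj1 w2 d_u1w2.symm d_w1w2.symm) h.symm)
  have Ew2v3 := mk d_w2v3 (fun h => nGadj3 w2 d_w2u3 d_w2w3 h.symm)
  have Eu3v1 := mk d_v1u3.symm (fun h => (nGadj1 u3 d_u1u3.symm d_w1u3.symm) h.symm)
  have Eu3v2 := mk d_v2u3.symm (fun h => (nGadj2 u3 d_u2u3.symm d_w2u3.symm) h.symm)
  have Ew3v1 := mk d_v1w3.symm (fun h => (nGadj1 w3 d_u1w3.symm d_w1w3.symm) h.symm)
  have Ew3v2 := mk d_v2w3.symm (fun h => (nGadj2 w3 d_u2w3.symm d_w2w3.symm) h.symm)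
  -- injectivity of `f` on distinct vertices
  have fne1 : f u1 ≠ f w1 := fun h => d_u1w1 (hinj h)
  have fne2 : f u2 ≠ f w2 := fun h => d_u2w2 (hinj h)
  have fne3 : f u3 ≠ f w3 := fun h => d_u3w3 (hinj h)
  -- pick directions for the paths between the images of the middles
  obtain ⟨a12, -, d12⟩ := Ev12
  obtain ⟨a13, -, d13⟩ := Ev13
  obtain ⟨a23, -, d23⟩ := Ev23
  rcases d12 with d12 | d12 <;> rcases d23 with d23 | d23 <;> rcases d13 with d13 | d13
  · exact middle_contra hOT d12 d23 fne2 Nu2 Nw2 Eu2v1 Eu2v3 Ew2v1 Ew2v3 Euw2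
  · exact middle_contra hOT d12 d23 fne2 Nu2 Nw2 Eu2v1 Eu2v3 Ew2v1 Ew2v3 Euw2
  · exact middle_contra hOT d13 d23 fne3 Nu3 Nw3 Eu3v1 Eu3v2 Ew3v1 Ew3v2 Euw3
  · exact middle_contra hOT d13 d12 fne1 Nu1 Nw1 Eu1v3 Eu1v2 Ew1v3 Ew1v2 Euw1
  · exact middle_contra hOT d12 d13 fne1 Nu1 Nw1 Eu1v2 Eu1v3 Ew1v2 Ew1v3 Euw1
  · exact middle_contra hOT d23 d13 fne3 Nu3 Nw3 Eu3v2 Eu3v1 Ew3v2 Ew3v1 Euw3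
  · exact middle_contra hOT d23 d12 fne2 Nu2 Nw2 Eu2v3 Eu2v1 Ew2v3 Ew2v1 Euw2
  · exact middle_contra hOT d23 d12 fne2 Nu2 Nw2 Eu2v3 Eu2v1 Ew2v3 Ew2v1 Euw2


/-- If `G` contains three vertex-disjoint induced paths of length 2 whose middle
vertices have degree exactly 2 in `G`, then the complement of `G` is not a willow;
in particular, the complement of the path `P₉` is not a willow. -/
theorem three_induced_P3_complement_not_willow {V : Type*} (G : SimpleGraph V)
    (u1 v1 w1 u2 v2 w2 u3 v3 w3 : V)
    (hdist : List.Pairwise (· ≠ ·) [u1, v1, w1, u2, v2, w2, u3, v3, w3])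
    (h1a : G.Adj u1 v1) (h1b : G.Adj v1 w1) (h1c : ¬ G.Adj u1 w1)
    (h2a : G.Adj u2 v2) (h2b : G.Adj v2 w2) (h2c : ¬ G.Adj u2 w2)
    (h3a : G.Adj u3 v3) (h3b : G.Adj v3 w3) (h3c : ¬ G.Adj u3 w3)
    (hdeg1 : G.neighborSet v1 = {u1, w1})
    (hdeg2 : G.neighborSet v2 = {u2, w2})
    (hdeg3 : G.neighborSet v3 = {u3, w3}) :
    ¬ IsWillow Gᶜ ∧ ¬ IsWillow (SimpleGraph.pathGraph 9)ᶜ := by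
  constructor
  · exact general_not_willow G u1 v1 w1 u2 v2 w2 u3 v3 w3 hdist h1a h1b h1c h2a h2b h2c
      h3a h3b h3c hdeg1 hdeg2 hdeg3
  · have nbhd : ∀ a b c : Fin 9, b.val = a.val + 1 → c.val = b.val + 1 →
        (SimpleGraph.pathGraph 9).neighborSet b = {a, c} := by
      intro a b c hab hbc
      ext x
      simp only [SimpleGraph.mem_neighborSet, SimpleGraph.pathGraph_adj, Set.mem_insert_iff,
        Set.mem_singleton_iff]
      constructor
      · rintro (h | h)
        · right; apply Fin.ext; omega
        · left; apply Fin.ext; omega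
      · rintro (h | h) <;> subst h <;> omega
    refine general_not_willow (SimpleGraph.pathGraph 9) 0 1 2 3 4 5 6 7 8 (by decide)
      ?_ ?_ ?_ ?_ ?_ ?_ ?_ ?_ ?_ ?_ ?_ ?_
    · rw [SimpleGraph.pathGraph_adj]; left; rfl
    · rw [SimpleGraph.pathGraph_adj]; left; rfl
    · rw [SimpleGraph.pathGraph_adj]; rintro (h | h) <;> revert h <;> decide
    · rw [SimpleGraph.pathGraph_adj]; left; rfl
    · rw [SimpleGraph.pathGraph_adj]; left; rfl
    · rw [SimpleGraph.pathGraph_adj]; rintro (h | h) <;> revert h <;> decide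
    · rw [SimpleGraph.pathGraph_adj]; left; rfl
    · rw [SimpleGraph.pathGraph_adj]; left; rfl
    · rw [SimpleGraph.pathGraph_adj]; rintro (h | h) <;> revert h <;> decide
    · exact nbhd 0 1 2 rfl rfl
    · exact nbhd 3 4 5 rfl rfl
    · exact nbhd 6 7 8 rfl rfl
end
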